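/- arXiv:1603.04320 — 5 statements merged into one kernel-verified Lean document; each statement's English description precedes it below -/
import Mathlib

section
/- Let V be a finite-dimensional vector space over ℚ, let Γ be a group and let ρ : Γ → GL(V) be a ℚ-linear representation. Let V_ℝ := ℝ ⊗_ℚ V with the induced Γ-action, and regard V as a subset of V_ℝ via v ↦ 1 ⊗ v. If the only vector of V fixed by every ρ(γ), γ ∈ Γ, is 0, then the set { v ∈ V_ℝ : ρ(γ)(v) − v ∈ V for every γ ∈ Γ } is exactly equal to V. -/
open TensorProduct

/-!
Choose a `ℚ`-basis `(bⱼ)` of `ℝ` with `b₀ = 1`. Every `x : ℝ ⊗ V` is uniquely `∑ⱼ bⱼ ⊗ xⱼ`,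
the action of `ρ(γ)` is coordinatewise, and `x ∈ V` means `xⱼ = 0` for `j ≠ 0`. So if
`ρ(γ)x - x ∈ V` for all `γ`, each coordinate `xⱼ` with `j ≠ 0` is `Γ`-invariant, hence zero.
-/

namespace TensorProduct

variable {R M N ι : Type*} [CommRing R] [AddCommGroup M] [Module R M] [AddCommGroup N]
  [Module R N] [DecidableEq ι] (ℬ : Module.Basis ι R M)

lemma equivFinsuppOfBasisLeft_lTensor_apply (f : N →ₗ[R] N) (x : M ⊗[R] N) (j : ι) :
    equivFinsuppOfBasisLeft ℬ (f.lTensor M x) j = f (equivFinsuppOfBasisLeft ℬ x j) := by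
  induction x using TensorProduct.induction_on with
  | zero => simp
  | tmul m n => simp
  | add x y hx hy => simp [hx, hy]

lemma mem_range_basis_tmul_iff (i : ι) (x : M ⊗[R] N) :
    x ∈ Set.range (ℬ i ⊗ₜ[R] · : N → M ⊗[R] N) ↔
      ∀ j ≠ i, equivFinsuppOfBasisLeft ℬ x j = 0 := by
  have h_single (n : N) : equivFinsuppOfBasisLeft ℬ (ℬ i ⊗ₜ n) = Finsupp.single i n := by
    simp [equivFinsuppOfBasisLeft_apply_tmul]
  calc x ∈ Set.range (ℬ i ⊗ₜ[R] · : N → M ⊗[R] N)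
      ↔ ∃ n, equivFinsuppOfBasisLeft ℬ x = Finsupp.single i n := by
        simp only [Set.mem_range, ← h_single, (equivFinsuppOfBasisLeft ℬ).injective.eq_iff,
          eq_comm]
    _ ↔ ∀ j ≠ i, equivFinsuppOfBasisLeft ℬ x j = 0 := by
        rw [← Finsupp.support_subset_singleton']
        simp only [Finset.subset_iff, Finset.mem_singleton, Finsupp.mem_support_iff]
        exact forall_congr' fun _ ↦ not_imp_comm

theorem lTensor_sub_self_mem_range_iff {κ : Type*} (f : κ → N →ₗ[R] N)
    (hfix : ∀ n, (∀ k, f k n = n) → n = 0) (i : ι) (x : M ⊗[R] N) :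
    (∀ k, (f k).lTensor M x - x ∈ Set.range (ℬ i ⊗ₜ[R] · : N → M ⊗[R] N)) ↔
      x ∈ Set.range (ℬ i ⊗ₜ[R] · : N → M ⊗[R] N) := by
  simp only [mem_range_basis_tmul_iff, map_sub, Finsupp.sub_apply,
    equivFinsuppOfBasisLeft_lTensor_apply, sub_eq_zero]
  refine ⟨fun h j hj ↦ hfix _ fun k ↦ h k j hj, fun h k j hj ↦ ?_⟩
  rw [h j hj, map_zero]

end TensorProduct

lemma Module.Basis.exists_apply_eq_of_ne_zero {K V : Type*} [DivisionRing K] [AddCommGroup V]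
    [Module K V] {v : V} (hv : v ≠ 0) : ∃ (s : Set V) (b : Module.Basis s K V) (i : s), b i = v :=
  let hs := (linearIndepOn_singleton_iff K).mpr hv
  ⟨_, .extend hs, ⟨v, Module.Basis.subset_extend hs rfl⟩, Module.Basis.extend_apply_self hs _⟩

theorem stmt_0_general {V : Type*} [AddCommGroup V] [Module ℚ V]
    {Γ : Type*} [Group Γ] (ρ : Γ →* (V ≃ₗ[ℚ] V))
    (hinv : ∀ v : V, (∀ γ : Γ, ρ γ v = v) → v = 0) :
    {x : ℝ ⊗[ℚ] V | ∀ γ : Γ,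
        ((ρ γ).toLinearMap.baseChange ℝ) x - x ∈ Set.range (fun v : V => (1 : ℝ) ⊗ₜ[ℚ] v)}
      = Set.range (fun v : V => (1 : ℝ) ⊗ₜ[ℚ] v) := by
  classical
  obtain ⟨s, b, i, hi⟩ := Module.Basis.exists_apply_eq_of_ne_zero (K := ℚ) (one_ne_zero' ℝ)
  ext x
  rw [Set.mem_ofPred_eq, ← hi]
  exact lTensor_sub_self_mem_range_iff b (fun γ ↦ (ρ γ).toLinearMap) hinv i x

/-- Lemma 3.7 (Lemma `letorsionmono`): if a rational representation of a group `Γ` on a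
finite-dimensional `ℚ`-vector space `V` has no nonzero invariant vector, then the set of
vectors `v` of `V_ℝ = ℝ ⊗ V` with `ρ(γ)(v) - v ∈ V` for all `γ` is exactly `V`. -/
theorem stmt_0 {V : Type*} [AddCommGroup V] [Module ℚ V] [FiniteDimensional ℚ V]
    {Γ : Type*} [Group Γ] (ρ : Γ →* (V ≃ₗ[ℚ] V))
    (hinv : ∀ v : V, (∀ γ : Γ, ρ γ v = v) → v = 0) :
    {x : ℝ ⊗[ℚ] V | ∀ γ : Γ,
        ((ρ γ).toLinearMap.baseChange ℝ) x - x ∈ Set.range (fun v : V => (1 : ℝ) ⊗ₜ[ℚ] v)}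
      = Set.range (fun v : V => (1 : ℝ) ⊗ₜ[ℚ] v) :=
  stmt_0_general ρ hinv
end

section
/- Let U ⊆ ℝ^m be a connected open set and let f : U → ℝ^k be a real-analytic map. If the differential df_b : ℝ^m → ℝ^k is surjective at some point b ∈ U, then the set { x ∈ U : df_x is surjective } is dense in U. -/
/-!
The differential `df_x` is surjective iff `det (J Jᵀ) ≠ 0`, where `J` is the Jacobian matrix at
`x`. This Gram determinant is a real-analytic function on `U`, nonzero at `b`. If some point of
`U` had a neighbourhood free of points with surjective differential, the Gram determinant would
vanish near that point, hence on all of the connected set `U` by the identity theorem,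
contradicting its value at `b`.
-/

open Topology Matrix

namespace Matrix

variable {m n R : Type*} [Fintype m] [Fintype n] [DecidableEq m]
  [Field R] [LinearOrder R] [IsStrictOrderedRing R]

theorem mulVec_surjective_iff_isUnit_mul_transpose {A : Matrix m n R} :
    Function.Surjective A.mulVec ↔ IsUnit (A * Aᵀ) := by
  constructor
  · intro hA
    obtain ⟨B, hAB⟩ := mulVec_surjective_iff_exists_right_inverse.mp hA
    have hAt : Function.Injective Aᵀ.mulVec := fun v w h => by
      simpa [mulVec_mulVec, ← transpose_mul, hAB] using congr_arg (Bᵀ *ᵥ ·) h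
    -- `A Aᵀ v = 0` forces `‖Aᵀ v‖² = 0`
    have hker : LinearMap.ker (A * Aᵀ).mulVecLin = LinearMap.ker Aᵀ.mulVecLin := by
      simpa using ker_mulVecLin_transpose_mul_self Aᵀ
    rw [← mulVec_injective_iff_isUnit]
    exact LinearMap.ker_eq_bot.mp (hker.trans (LinearMap.ker_eq_bot.mpr hAt))
  · intro h v
    obtain ⟨w, hw⟩ := mulVec_surjective_iff_isUnit.mpr h v
    exact ⟨Aᵀ *ᵥ w, by rwa [mulVec_mulVec]⟩

theorem mulVec_surjective_iff_det_mul_transpose_ne_zero {A : Matrix m n R} :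
    Function.Surjective A.mulVec ↔ (A * Aᵀ).det ≠ 0 := by
  rw [mulVec_surjective_iff_isUnit_mul_transpose, isUnit_iff_isUnit_det, isUnit_iff_ne_zero]

end Matrix

section Analytic

variable {𝕜 E F : Type*} [NontriviallyNormedField 𝕜] [NormedAddCommGroup E] [NormedSpace 𝕜 E]
  [NormedAddCommGroup F] [NormedSpace 𝕜 F] {s : Set E} {l m n : Type*}

theorem analyticOnNhd_matrix_mul_apply [Fintype m] {A : E → Matrix l m 𝕜} {B : E → Matrix m n 𝕜}
    (hA : ∀ i j, AnalyticOnNhd 𝕜 (fun x => A x i j) s)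
    (hB : ∀ i j, AnalyticOnNhd 𝕜 (fun x => B x i j) s) (i : l) (j : n) :
    AnalyticOnNhd 𝕜 (fun x => (A x * B x) i j) s := by
  simp only [mul_apply]
  exact Finset.analyticOnNhd_fun_sum _ fun k _ => (hA i k).mul (hB k j)

theorem analyticOnNhd_matrix_det [Fintype n] [DecidableEq n] {M : E → Matrix n n 𝕜}
    (hM : ∀ i j, AnalyticOnNhd 𝕜 (fun x => M x i j) s) :
    AnalyticOnNhd 𝕜 (fun x => (M x).det) s := by
  simp only [det_apply']
  exact Finset.analyticOnNhd_fun_sum _ fun σ _ =>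
    analyticOnNhd_const.mul (Finset.analyticOnNhd_fun_prod _ fun i _ => hM (σ i) i)

theorem AnalyticOnNhd.subset_closure_inter_support {g : E → F} {U : Set E}
    (hg : AnalyticOnNhd 𝕜 g U) (hU : IsOpen U) (hUc : IsPreconnected U) {b : E} (hb : b ∈ U)
    (hgb : g b ≠ 0) : U ⊆ closure (U ∩ Function.support g) := by
  intro x hx
  by_contra hxS
  have hzero : g =ᶠ[𝓝 x] 0 := by
    filter_upwards [(isClosed_closure.isOpen_compl.inter hU).mem_nhds ⟨hxS, hx⟩]
      with y ⟨hyS, hyU⟩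
    by_contra hy
    exact hyS (subset_closure ⟨hyU, hy⟩)
  exact hgb (hg.eqOn_zero_of_preconnected_of_eventuallyEq_zero hUc hx hzero hb)

end Analytic

section Jacobian

variable {𝕜 : Type*} [NontriviallyNormedField 𝕜] {m n : Type*} [Fintype n] [DecidableEq n]

noncomputable def jacobianMatrix (f : (n → 𝕜) → (m → 𝕜)) (x : n → 𝕜) : Matrix m n 𝕜 :=
  LinearMap.toMatrix' (fderiv 𝕜 f x : (n → 𝕜) →ₗ[𝕜] (m → 𝕜))

theorem jacobianMatrix_mulVec (f : (n → 𝕜) → (m → 𝕜)) (x : n → 𝕜) :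
    (jacobianMatrix f x).mulVec = fderiv 𝕜 f x :=
  funext fun v => LinearMap.toMatrix'_mulVec _ v

theorem AnalyticOnNhd.jacobianMatrix_apply [Fintype m] [CompleteSpace 𝕜] {f : (n → 𝕜) → (m → 𝕜)}
    {s : Set (n → 𝕜)} (hf : AnalyticOnNhd 𝕜 f s) (i : m) (j : n) :
    AnalyticOnNhd 𝕜 (fun x => jacobianMatrix f x i j) s := by
  let entry : ((n → 𝕜) →L[𝕜] (m → 𝕜)) →L[𝕜] 𝕜 :=
    (ContinuousLinearMap.proj i).comp (ContinuousLinearMap.apply 𝕜 (m → 𝕜) (Pi.single j 1))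
  have hentry : (fun x => jacobianMatrix f x i j) = entry ∘ fderiv 𝕜 f := by
    ext x
    simp [entry, jacobianMatrix, LinearMap.toMatrix'_apply]
  rw [hentry]
  exact fun x hx => (entry.analyticAt _).comp (hf.fderiv x hx)

end Jacobian

/-- If a real-analytic map `f : U → ℝ^k` on a connected open set `U ⊆ ℝ^m` has surjective
differential at some point of `U`, then the set of points of `U` where the differential is
surjective is dense in `U`. -/
theorem stmt_1 {m k : ℕ} {U : Set (Fin m → ℝ)} (hU : IsOpen U) (hUconn : IsConnected U)
    {f : (Fin m → ℝ) → (Fin k → ℝ)} (hf : AnalyticOnNhd ℝ f U)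
    {b : Fin m → ℝ} (hb : b ∈ U) (hsurj : Function.Surjective (fderiv ℝ f b)) :
    U ⊆ closure {x | x ∈ U ∧ Function.Surjective (fderiv ℝ f x)} := by
  let gram x := (jacobianMatrix f x * (jacobianMatrix f x)ᵀ).det
  have hsurj_iff x : Function.Surjective (fderiv ℝ f x) ↔ gram x ≠ 0 := by
    rw [← jacobianMatrix_mulVec, mulVec_surjective_iff_det_mul_transpose_ne_zero]
  have hgram : AnalyticOnNhd ℝ gram U :=
    analyticOnNhd_matrix_det <| analyticOnNhd_matrix_mul_apply hf.jacobianMatrix_apply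
      fun i j => hf.jacobianMatrix_apply j i
  exact (hgram.subset_closure_inter_support hU hUconn.isPreconnected hb
    ((hsurj_iff b).mp hsurj)).trans (closure_mono fun x hx => ⟨hx.1, (hsurj_iff x).mpr hx.2⟩)
end

section
/- Let U ⊆ ℝ^m be a connected open set, let f : U → ℝ^k be a real-analytic map, and let D ⊆ ℝ^k be a dense subset. If the differential df_b : ℝ^m → ℝ^k is surjective at some point b ∈ U, then the preimage f^{-1}(D) is dense in U. -/
/-!
Choose a right inverse `u` of `df_b`. The function `x ↦ det (df_x ∘ u)` is analytic on `U` and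
equals `1` at `b`, so by the identity theorem its nonvanishing set, on which `df_x` is surjective,
is dense in `U`. Near such a point `f` is an open map (local surjectivity theorem), so every
neighbourhood of it contains points mapped into the dense set `D`.
-/

open Filter Set Topology

section

variable {𝕜 : Type*} [NontriviallyNormedField 𝕜]
  {E : Type*} [NormedAddCommGroup E] [NormedSpace 𝕜 E]
  {F : Type*} [NormedAddCommGroup F] [NormedSpace 𝕜 F]

theorem AnalyticOnNhd.matrix_det {ι : Type*} [Fintype ι] [DecidableEq ι] {s : Set E}
    {A : E → Matrix ι ι 𝕜} (hA : ∀ i j, AnalyticOnNhd 𝕜 (fun x ↦ A x i j) s) :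
    AnalyticOnNhd 𝕜 (fun x ↦ (A x).det) s := by
  simp_rw [Matrix.det_apply']
  exact Finset.analyticOnNhd_fun_sum _ fun σ _ ↦ analyticOnNhd_const.mul <|
    Finset.analyticOnNhd_fun_prod _ fun i _ ↦ hA (σ i) i

theorem AnalyticOnNhd.linearMap_det [CompleteSpace 𝕜] [FiniteDimensional 𝕜 F] {s : Set E}
    {L : E → F →L[𝕜] F} (hL : AnalyticOnNhd 𝕜 L s) :
    AnalyticOnNhd 𝕜 (fun x ↦ LinearMap.det (L x : F →ₗ[𝕜] F)) s := by
  let b := Module.finBasis 𝕜 F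
  simp_rw [← LinearMap.det_toMatrix b]
  refine AnalyticOnNhd.matrix_det fun i j x hx ↦ ?_
  simp only [LinearMap.toMatrix_apply, ContinuousLinearMap.coe_coe]
  exact ((ContinuousLinearMap.proj i).comp
    ((b.equivFunL : F →L[𝕜] Fin _ → 𝕜).comp (ContinuousLinearMap.apply 𝕜 F (b j)))).analyticAt _
    |>.comp (hL x hx)

theorem AnalyticOnNhd.subset_closure_setOf_ne_zero {G : Type*} [NormedAddCommGroup G]
    [NormedSpace 𝕜 G] {U : Set E} {g : E → G} (hU : IsOpen U) (hUc : IsPreconnected U)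
    (hg : AnalyticOnNhd 𝕜 g U) {b : E} (hb : b ∈ U) (hgb : g b ≠ 0) :
    U ⊆ closure {x ∈ U | g x ≠ 0} := by
  intro x hx
  by_contra hcl
  have hzero : g =ᶠ[𝓝 x] 0 := by
    filter_upwards [hU.mem_nhds hx, isOpen_compl_iff.2 isClosed_closure |>.mem_nhds hcl]
      with y hyU hy
    by_contra hne
    exact hy (subset_closure ⟨hyU, hne⟩)
  exact hgb (hg.eqOn_zero_of_preconnected_of_eventuallyEq_zero hUc hx hzero hb)

theorem AnalyticOnNhd.subset_closure_setOf_surjective_fderiv [CompleteSpace 𝕜] [CompleteSpace F]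
    [FiniteDimensional 𝕜 F] {U : Set E} {f : E → F} (hU : IsOpen U) (hUc : IsPreconnected U)
    (hf : AnalyticOnNhd 𝕜 f U) {b : E} (hb : b ∈ U)
    (hsurj : Function.Surjective (fderiv 𝕜 f b)) :
    U ⊆ closure {x ∈ U | Function.Surjective (fderiv 𝕜 f x)} := by
  obtain ⟨u₀, hu₀⟩ := (fderiv 𝕜 f b : E →ₗ[𝕜] F).exists_rightInverse_of_surjective
    (LinearMap.range_eq_top.2 hsurj)
  let u : F →L[𝕜] E := LinearMap.toContinuousLinearMap u₀
  let g : E → 𝕜 := fun x ↦ LinearMap.det ((fderiv 𝕜 f x).comp u : F →ₗ[𝕜] F)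
  have hg : AnalyticOnNhd 𝕜 g U := AnalyticOnNhd.linearMap_det fun x hx ↦
    ((ContinuousLinearMap.compL 𝕜 F E F).flip u).analyticAt _ |>.comp (hf.fderiv_of_isOpen hU x hx)
  have hgb : g b = 1 := by
    rw [← LinearMap.det_id (A := 𝕜) (M := F), ← hu₀]
    rfl
  refine (hg.subset_closure_setOf_ne_zero hU hUc hb (hgb ▸ one_ne_zero)).trans
    (closure_mono fun x ⟨hxU, hgx⟩ ↦ ⟨hxU, fun z ↦ ?_⟩)
  obtain ⟨w, hw⟩ := (LinearMap.equivOfDetNeZero _ hgx).surjective z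
  exact ⟨u w, hw⟩

theorem HasStrictFDerivAt.frequently_mem_of_dense [CompleteSpace E] [CompleteSpace F]
    {f : E → F} {f' : E →L[𝕜] F} {a : E} (hf : HasStrictFDerivAt f f' a)
    (hf' : Function.Surjective f') {D : Set F} (hD : Dense D) :
    ∃ᶠ x in 𝓝 a, f x ∈ D := by
  have := mem_closure_iff_frequently.1 (hD (f a))
  rwa [← hf.map_nhds_eq_of_surj (LinearMap.range_eq_top.2 hf'), frequently_map] at this

end

/-- (Proposition `ledense` (i), abstract form.) If a real-analytic map `f : U → ℝ^k` on a
connected open set `U ⊆ ℝ^m` has surjective differential at some point of `U`, then for any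
dense subset `D ⊆ ℝ^k`, the preimage `f⁻¹(D)` is dense in `U`. -/
theorem stmt_2 {m k : ℕ} {U : Set (Fin m → ℝ)} (hU : IsOpen U) (hUconn : IsConnected U)
    {f : (Fin m → ℝ) → (Fin k → ℝ)} (hf : AnalyticOnNhd ℝ f U)
    {D : Set (Fin k → ℝ)} (hD : Dense D)
    {b : Fin m → ℝ} (hb : b ∈ U) (hsurj : Function.Surjective (fderiv ℝ f b)) :
    U ⊆ closure (U ∩ f ⁻¹' D) := by
  refine (hf.subset_closure_setOf_surjective_fderiv hU hUconn.isPreconnected hb hsurj).trans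
    (closure_minimal (fun y ⟨hyU, hy⟩ ↦ ?_) isClosed_closure)
  have hfreq := (hf y hyU).hasStrictFDerivAt.frequently_mem_of_dense hy hD
  exact mem_closure_iff_frequently.2 (hfreq.and_eventually (hU.mem_nhds hyU)
    |>.mono fun x ⟨hxD, hxU⟩ ↦ ⟨hxU, hxD⟩)
end

section
/- Let F be a homogeneous cubic polynomial in 5 variables over ℂ, and suppose there exist two distinct 3-dimensional linear subspaces W₁ ≠ W₂ of ℂ⁵ such that every first partial derivative of F vanishes at every point of W₁ and at every point of W₂. Then F is a cone, i.e. there exists a nonzero v ∈ ℂ⁵ with Σᵢ vᵢ ∂F/∂Xᵢ = 0 as a polynomial. -/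
/-!
Write `T(x, y, z) = hessianAtZero (dirDeriv z F) x y` for the symmetric trilinear form of the
cubic `F`; then `2 ∑ vᵢ ∂ᵢF(x) = T(x, x, v)`, and `F` being singular along `W` means
`T(W, W, ·) = 0`. Two distinct planes `W₁, W₂ ⊆ ℂ⁵` span a subspace `S` of codimension at most
one and meet in a subspace of dimension `6 - dim S`. For `v ∈ W₁ ∩ W₂` the form `T(·, ·, v)`
vanishes on `S × ℂ⁵`, because `T(a, y, v) = T(a, v, y)` with `a` and `v` in a common plane. So
if `S = ℂ⁵` any nonzero such `v` works; otherwise `T(·, ·, v)` is determined by `T(e, e, v)` for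
a vector `e ∉ S`, and this single linear condition has a nonzero solution in the
two-dimensional `W₁ ∩ W₂`.
-/

open MvPolynomial Module

namespace MvPolynomial

variable {σ R : Type*} [CommSemiring R]

theorem pderiv_comm (i j : σ) (p : MvPolynomial σ R) :
    pderiv i (pderiv j p) = pderiv j (pderiv i p) := by
  classical
  induction p using MvPolynomial.induction_on with
  | C a => simp
  | add p q hp hq => simp [hp, hq]
  | mul_X p k hp =>
    simp only [pderiv_mul, map_add, pderiv_X, hp]
    by_cases hik : i = k <;> by_cases hjk : j = k <;> simp [hik, hjk]

theorem IsHomogeneous.eval_eq_eval_zero {p : MvPolynomial σ R} (h : p.IsHomogeneous 0)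
    (x : σ → R) : eval x p = eval 0 p := by
  rw [totalDegree_eq_zero_iff_eq_C.mp (Nat.le_zero.mp h.totalDegree_le)]
  simp

variable [Fintype σ]

noncomputable def dirDeriv : (σ → R) →ₗ[R] Module.End R (MvPolynomial σ R) :=
  ∑ i, (LinearMap.proj i).smulRight (pderiv i).toLinearMap

theorem dirDeriv_apply (v : σ → R) (p : MvPolynomial σ R) :
    dirDeriv v p = ∑ i, v i • pderiv i p := by
  simp [dirDeriv]

theorem dirDeriv_comm (v w : σ → R) (p : MvPolynomial σ R) :
    dirDeriv v (dirDeriv w p) = dirDeriv w (dirDeriv v p) := by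
  simp only [dirDeriv_apply, map_sum, map_smul, Finset.smul_sum]
  rw [Finset.sum_comm]
  simp only [pderiv_comm, smul_comm (v _)]

theorem IsHomogeneous.dirDeriv {p : MvPolynomial σ R} {n : ℕ} (h : p.IsHomogeneous n)
    (v : σ → R) : (MvPolynomial.dirDeriv v p).IsHomogeneous (n - 1) := by
  rw [dirDeriv_apply]
  exact IsHomogeneous.sum _ _ _ fun i _ => smul_eq_C_mul (pderiv i p) (v i) ▸ h.pderiv.C_mul _

theorem IsHomogeneous.eval_dirDeriv_self {p : MvPolynomial σ R} {n : ℕ} (h : p.IsHomogeneous n)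
    (x : σ → R) : eval x (MvPolynomial.dirDeriv x p) = n * eval x p := by
  simpa [dirDeriv_apply, smul_eval, nsmul_eq_mul] using congrArg (eval x) h.sum_X_mul_pderiv

noncomputable def hessianAtZero (p : MvPolynomial σ R) : LinearMap.BilinForm R (σ → R) :=
  (dirDeriv.compl₂ (dirDeriv.flip p)).compr₂ (aeval 0).toLinearMap

theorem hessianAtZero_apply (p : MvPolynomial σ R) (x y : σ → R) :
    hessianAtZero p x y = eval 0 (dirDeriv x (dirDeriv y p)) := by
  simp [hessianAtZero]

theorem isSymm_hessianAtZero (p : MvPolynomial σ R) : (hessianAtZero p).IsSymm :=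
  ⟨fun x y => by simp only [hessianAtZero_apply, dirDeriv_comm x y]⟩

theorem hessianAtZero_dirDeriv_comm (p : MvPolynomial σ R) (x y z : σ → R) :
    hessianAtZero (dirDeriv z p) x y = hessianAtZero (dirDeriv y p) x z := by
  simp only [hessianAtZero_apply, dirDeriv_comm y z]

theorem IsHomogeneous.two_mul_eval_eq_hessianAtZero {p : MvPolynomial σ R}
    (h : p.IsHomogeneous 2) (x : σ → R) : 2 * eval x p = hessianAtZero p x x := by
  have h₁ : (MvPolynomial.dirDeriv x p).IsHomogeneous 1 := h.dirDeriv x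
  have h₀ : (MvPolynomial.dirDeriv x (MvPolynomial.dirDeriv x p)).IsHomogeneous 0 := h₁.dirDeriv x
  rw [hessianAtZero_apply, ← h₀.eval_eq_eval_zero x, h₁.eval_dirDeriv_self, h.eval_dirDeriv_self]
  push_cast
  ring

end MvPolynomial

theorem LinearMap.BilinForm.IsSymm.eq_zero_of_le_ker {R M : Type*} [CommSemiring R]
    [AddCommMonoid M] [Module R M] {B : LinearMap.BilinForm R M} (hB : B.IsSymm)
    {S : Submodule R M} {e : M} (hS : S ≤ LinearMap.ker B) (hSe : S ⊔ R ∙ e = ⊤)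
    (he : B e e = 0) : B = 0 := by
  have hBe : B e = 0 := by
    have : S ⊔ R ∙ e ≤ LinearMap.ker (B e) :=
      sup_le (fun s hs => by rw [LinearMap.mem_ker, hB.eq, hS hs, LinearMap.zero_apply])
        ((Submodule.span_singleton_le_iff_mem _ _).mpr he)
    rwa [hSe, top_le_iff, LinearMap.ker_eq_top] at this
  have : S ⊔ R ∙ e ≤ LinearMap.ker B :=
    sup_le hS ((Submodule.span_singleton_le_iff_mem _ _).mpr hBe)
  rwa [hSe, top_le_iff, LinearMap.ker_eq_top] at this

namespace Submodule

variable {K V : Type*} [Field K] [AddCommGroup V] [Module K V]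

theorem exists_mem_ne_zero_apply_eq_zero (U : Submodule K V) [FiniteDimensional K U]
    (φ : V →ₗ[K] K) (hU : 2 ≤ finrank K U) : ∃ v ∈ U, v ≠ 0 ∧ φ v = 0 := by
  obtain ⟨⟨v, hvU⟩, hv, hv0⟩ := exists_mem_ne_zero_of_ne_bot
    (LinearMap.ker_ne_bot_of_finrank_lt (f := φ ∘ₗ U.subtype) (by rw [finrank_self]; omega))
  exact ⟨v, hvU, by simpa using hv0, hv⟩

theorem sup_eq_top_or_exists_sup_span_singleton_eq_top (hV : finrank K V = 5)
    {W₁ W₂ : Submodule K V} (h₁ : finrank K W₁ = 3) (h₂ : finrank K W₂ = 3) (hne : W₁ ≠ W₂) :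
    (W₁ ⊔ W₂ = ⊤ ∧ W₁ ⊓ W₂ ≠ ⊥) ∨
      ∃ e, W₁ ⊔ W₂ ⊔ K ∙ e = ⊤ ∧ finrank K ↥(W₁ ⊓ W₂) = 2 := by
  have : FiniteDimensional K V := Module.finite_of_finrank_eq_succ hV
  have hdim := finrank_sup_add_finrank_inf_eq W₁ W₂
  have hlt : W₁ < W₁ ⊔ W₂ := lt_of_le_of_ne le_sup_left fun h =>
    hne (eq_of_le_of_finrank_eq (h ▸ le_sup_right) (h₂.trans h₁.symm)).symm
  have h4 := h₁ ▸ finrank_lt_finrank_of_lt hlt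
  by_cases htop : W₁ ⊔ W₂ = ⊤
  · refine .inl ⟨htop, fun hbot => ?_⟩
    rw [htop, hbot, finrank_top, finrank_bot, hV] at hdim
    omega
  · have h5 := finrank_lt htop
    obtain ⟨e, he⟩ := SetLike.exists_not_mem_of_ne_top _ htop
    refine .inr ⟨e, eq_top_of_finrank_eq ?_, by omega⟩
    rw [finrank_sup_span_singleton he]
    omega

end Submodule

namespace MvPolynomial

variable {σ K : Type*} [Field K]

def IsSingularAlong (F : MvPolynomial σ K) (W : Submodule K (σ → K)) : Prop :=
  ∀ x ∈ W, ∀ i, eval x (pderiv i F) = 0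

variable [Fintype σ] {F : MvPolynomial σ K} {W W₁ W₂ : Submodule K (σ → K)}

theorem IsSingularAlong.hessianAtZero_dirDeriv_eq_zero [NeZero (2 : K)]
    (hW : F.IsSingularAlong W) (hF : F.IsHomogeneous 3) (z : σ → K) {x y : σ → K}
    (hx : x ∈ W) (hy : y ∈ W) : hessianAtZero (dirDeriv z F) x y = 0 := by
  have hdiag : ∀ w ∈ W, hessianAtZero (dirDeriv z F) w w = 0 := fun w hw => by
    rw [← (hF.dirDeriv z).two_mul_eval_eq_hessianAtZero, dirDeriv_apply, map_sum]
    simp [smul_eval, hW w hw]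
  rw [(isSymm_hessianAtZero _).polarization, hdiag x hx, hdiag y hy, hdiag _ (W.add_mem hx hy)]
  simp

theorem IsSingularAlong.le_ker_hessianAtZero [NeZero (2 : K)] (hW : F.IsSingularAlong W)
    (hF : F.IsHomogeneous 3) {v : σ → K} (hv : v ∈ W) :
    W ≤ LinearMap.ker (hessianAtZero (dirDeriv v F)) := fun a ha => by
  rw [LinearMap.mem_ker]
  ext y
  rw [hessianAtZero_dirDeriv_comm, LinearMap.zero_apply]
  exact hW.hessianAtZero_dirDeriv_eq_zero hF y ha hv

theorem dirDeriv_eq_zero_of_isSingularAlong [CharZero K] (hF : F.IsHomogeneous 3)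
    (h₁ : F.IsSingularAlong W₁) (h₂ : F.IsSingularAlong W₂) {v e : σ → K} (hv : v ∈ W₁ ⊓ W₂)
    (he : W₁ ⊔ W₂ ⊔ K ∙ e = ⊤) (hev : hessianAtZero (dirDeriv e F) e v = 0) :
    dirDeriv v F = 0 := by
  have hB : hessianAtZero (dirDeriv v F) = 0 :=
    (isSymm_hessianAtZero _).eq_zero_of_le_ker
      (sup_le (h₁.le_ker_hessianAtZero hF hv.1) (h₂.le_ker_hessianAtZero hF hv.2)) he
      (by rwa [hessianAtZero_dirDeriv_comm])
  refine MvPolynomial.funext fun x => ?_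
  have := (hF.dirDeriv v).two_mul_eval_eq_hessianAtZero x
  rw [hB] at this
  simpa using this

end MvPolynomial

/-- If a homogeneous cubic in 5 variables is singular along two distinct projective planes
(all first partial derivatives vanish on two distinct 3-dimensional linear subspaces of `ℂ⁵`),
then it is a cone. -/
theorem stmt_5 (F : MvPolynomial (Fin 5) ℂ) (hF : F.IsHomogeneous 3)
    (W₁ W₂ : Submodule ℂ (Fin 5 → ℂ))
    (h1 : Module.finrank ℂ W₁ = 3) (h2 : Module.finrank ℂ W₂ = 3) (hne : W₁ ≠ W₂)
    (hv1 : ∀ x ∈ W₁, ∀ i, MvPolynomial.eval x (pderiv i F) = 0)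
    (hv2 : ∀ x ∈ W₂, ∀ i, MvPolynomial.eval x (pderiv i F) = 0) :
    ∃ v : Fin 5 → ℂ, v ≠ 0 ∧ ∑ i, v i • pderiv i F = 0 := by
  simp only [← dirDeriv_apply]
  rcases Submodule.sup_eq_top_or_exists_sup_span_singleton_eq_top (Module.finrank_fin_fun ℂ)
    h1 h2 hne with ⟨htop, hinf⟩ | ⟨e, he, hinf⟩
  · obtain ⟨v, hv, hv0⟩ := Submodule.exists_mem_ne_zero_of_ne_bot hinf
    exact ⟨v, hv0, dirDeriv_eq_zero_of_isSingularAlong hF hv1 hv2 hv (e := 0)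
      (by simpa using htop) (by simp)⟩
  · obtain ⟨v, hv, hv0, hev⟩ := (W₁ ⊓ W₂).exists_mem_ne_zero_apply_eq_zero
      (hessianAtZero (dirDeriv e F) e) (by omega)
    exact ⟨v, hv0, dirDeriv_eq_zero_of_isSingularAlong hF hv1 hv2 hv he hev⟩
end

section
/- Let V ⊆ ℂ^n be an open set and let f, f₁, …, f_{2n} : V → ℂ be holomorphic functions such that at every point b ∈ V the complex differentials df₁(b), …, df_{2n}(b) are linearly independent over ℝ (as real-linear functionals on ℂ^n), and let a = (a₁, …, a_{2n}) : V → ℝ^{2n} be the unique map with real values such that df(b) = Σᵢ aᵢ(b)·dfᵢ(b) for every b ∈ V. Then for every b ∈ V, the kernel of the real derivative da_b : ℂ^n → ℝ^{2n} is stable under multiplication by i, i.e. it is a complex linear subspace of ℂ^n. -/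
/-!
Put `B(u, w) = Σᵢ (da_b u)ᵢ · dfᵢ(b) w`, real-linear in `u` and complex-linear in `w`.
On the complex line `z ↦ b + z • u` the functions `z ↦ df(b + z u) u` and `z ↦ dfᵢ(b + z u) u`
are holomorphic in one variable, and differentiating `df u = Σᵢ aᵢ · dfᵢ u` there at `z = 0`
shows that `t ↦ Σᵢ (da_b (t • u))ᵢ · dfᵢ(b) u` is complex-linear, i.e. `B(I u, u) = I · B(u, u)`.
Polarization upgrades this to `B(I u, ·) = I · B(u, ·)`. Hence `da_b v = 0` forces
`Σᵢ (da_b (I v))ᵢ · dfᵢ(b) = 0`, and the linear independence of the `dfᵢ(b)` gives `da_b (I v) = 0`.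
-/

open Complex Filter Topology

variable {E F : Type*} [NormedAddCommGroup E] [NormedSpace ℂ E]
  [NormedAddCommGroup F] [NormedSpace ℂ F]

theorem LinearMap.apply_I_smul_left_of_apply_I_smul_self (B : E →ₗ[ℝ] E →L[ℝ] F)
    (hB : ∀ u w, B u (I • w) = I • B u w) (hdiag : ∀ u, B (I • u) u = I • B u u) (u w : E) :
    B (I • u) w = I • B u w := by
  -- `C` is alternating, `ℂ`-linear in its second slot and `ℂ`-antilinear in its first, so `C = 0`.
  set C : E → E → F := fun u w => B (I • u) w - I • B u w with hC
  have hCdiag : ∀ u, C u u = 0 := fun u => sub_eq_zero.mpr (hdiag u)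
  have hCalt : ∀ u w, C u w = -C w u := by
    intro u w
    have h := hCdiag (u + w)
    have hu := hCdiag u
    have hw := hCdiag w
    simp only [hC, smul_add, map_add, FunLike.coe_add, Pi.add_apply] at h hu hw ⊢
    linear_combination (norm := module) h - hu - hw
  have hCI_right : ∀ u w, C u (I • w) = I • C u w := by
    intro u w
    simp only [hC, hB, smul_sub]
  have hCI_left : ∀ u w, C (I • u) w = -I • C u w := by
    intro u w
    have hII : I • I • u = -u := by rw [smul_smul, I_mul_I, neg_one_smul]
    simp only [hC, hII, map_neg, FunLike.coe_neg, Pi.neg_apply, smul_sub, smul_smul]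
    rw [show -I * I = 1 by simp]
    module
  have h2 : (2 * I) • C u w = 0 := by
    have h := hCI_right u w
    rw [hCalt, hCI_left, hCalt w u] at h
    linear_combination (norm := module) -h
  have h2I : (2 * I : ℂ) ≠ 0 := mul_ne_zero two_ne_zero I_ne_zero
  exact sub_eq_zero.mp ((smul_eq_zero.mp h2).resolve_left h2I)

theorem hasDerivAt_add_smul (b u : E) (z : ℂ) : HasDerivAt (fun z : ℂ => b + z • u) u z := by
  simpa using ((hasDerivAt_id z).smul_const u).const_add b

theorem DifferentiableOn.differentiableAt_fderiv_apply_add_smul [CompleteSpace F] {g : E → F}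
    {V : Set E} (hg : DifferentiableOn ℂ g V) (hV : IsOpen V) {b : E} (hb : b ∈ V) (u : E) :
    DifferentiableAt ℂ (fun z : ℂ => fderiv ℂ g (b + z • u) u) 0 := by
  set γ : ℂ → E := fun z => b + z • u
  have hΩ : IsOpen (γ ⁻¹' V) := hV.preimage (by fun_prop)
  have h0 : (0 : ℂ) ∈ γ ⁻¹' V := by simpa [γ] using hb
  have hderiv : ∀ z ∈ γ ⁻¹' V, HasDerivAt (g ∘ γ) (fderiv ℂ g (γ z) u) z := fun z hz =>
    (hg.differentiableAt (hV.mem_nhds hz)).hasFDerivAt.comp_hasDerivAt z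
      (hasDerivAt_add_smul b u z)
  have hanalytic : AnalyticOnNhd ℂ (g ∘ γ) (γ ⁻¹' V) :=
    analyticOnNhd (fun z hz => (hderiv z hz).differentiableAt.differentiableWithinAt) hΩ
  have heq : _root_.deriv (g ∘ γ) =ᶠ[𝓝 0] fun z => fderiv ℂ g (γ z) u :=
    eventually_of_mem (hΩ.mem_nhds h0) fun z hz => (hderiv z hz).deriv
  exact heq.differentiableAt_iff.mp (hanalytic.deriv 0 h0).differentiableAt

theorem sum_fderiv_real_coeff_I_smul {ι : Type*} [Fintype ι] {g : E → F} {h : ι → E → F}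
    {c : E → ι → ℝ} {b : E} (hg : DifferentiableAt ℂ g b) (hh : ∀ i, DifferentiableAt ℂ (h i) b)
    (hc : DifferentiableAt ℝ c b) (hgh : g =ᶠ[𝓝 b] fun x => ∑ i, c x i • h i x) (u : E) :
    ∑ i, fderiv ℝ c b (I • u) i • h i b = I • ∑ i, fderiv ℝ c b u i • h i b := by
  set M : E →L[ℂ] F := fderiv ℂ g b - ∑ i, c b i • fderiv ℂ (h i) b
  have hsum : HasFDerivAt (fun x => ∑ i, c x i • h i x)
      (∑ i, (c b i • (fderiv ℂ (h i) b).restrictScalars ℝ +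
        ((ContinuousLinearMap.proj i).comp (fderiv ℝ c b)).smulRight (h i b))) b :=
    HasFDerivAt.fun_sum fun i _ => ((hasFDerivAt_apply i (c b)).comp b hc.hasFDerivAt).smul
      ((hh i).hasFDerivAt.restrictScalars ℝ)
  have hderiv :=
    ((hg.hasFDerivAt.restrictScalars ℝ).congr_of_eventuallyEq hgh.symm).unique hsum
  have hM : ∀ v, ∑ i, fderiv ℝ c b v i • h i b = M v := by
    intro v
    have hv := congrArg (· v) hderiv
    simp only [ContinuousLinearMap.coe_restrictScalars', Finset.sum_add_distrib, add_apply,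
      sum_apply, smul_apply, ContinuousLinearMap.smulRight_apply, ContinuousLinearMap.comp_apply,
      ContinuousLinearMap.proj_apply, sub_apply, M] at hv ⊢
    rw [hv, add_sub_cancel_left]
  rw [hM, hM, ← M.map_smul]

theorem sum_fderiv_real_coeff_I_smul_apply_self [CompleteSpace F] {ι : Type*} [Fintype ι]
    {V : Set E} (hV : IsOpen V) {f : E → F} {fi : ι → E → F} (hf : DifferentiableOn ℂ f V)
    (hfi : ∀ i, DifferentiableOn ℂ (fi i) V) {a : E → ι → ℝ}
    (ha : ∀ x ∈ V, fderiv ℂ f x = ∑ i, ((a x i : ℂ) • fderiv ℂ (fi i) x)) {b : E} (hb : b ∈ V)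
    (hab : DifferentiableAt ℝ a b) (u : E) :
    ∑ i, fderiv ℝ a b (I • u) i • fderiv ℂ (fi i) b u =
      I • ∑ i, fderiv ℝ a b u i • fderiv ℂ (fi i) b u := by
  set γ : ℂ → E := fun z => b + z • u
  have hγ0 : γ 0 = b := by simp [γ]
  have hab' : HasFDerivAt a (fderiv ℝ a b) (γ 0) := by rw [hγ0]; exact hab.hasFDerivAt
  have hline : HasFDerivAt (a ∘ γ) ((fderiv ℝ a b).comp
      ((ContinuousLinearMap.toSpanSingleton ℂ u).restrictScalars ℝ)) 0 :=
    hab'.comp 0 ((hasDerivAt_add_smul b u 0).hasFDerivAt.restrictScalars ℝ)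
  have heq : (fun z => fderiv ℂ f (γ z) u) =ᶠ[𝓝 0]
      fun z => ∑ i, (a ∘ γ) z i • fderiv ℂ (fi i) (γ z) u := by
    have hΩ : γ ⁻¹' V ∈ 𝓝 (0 : ℂ) :=
      (hasDerivAt_add_smul b u 0).continuousAt.preimage_mem_nhds (by simpa using hV.mem_nhds hb)
    filter_upwards [hΩ] with z hz
    simp [ha _ hz, Complex.coe_smul]
  have key := sum_fderiv_real_coeff_I_smul (hf.differentiableAt_fderiv_apply_add_smul hV hb u)
    (fun i => (hfi i).differentiableAt_fderiv_apply_add_smul hV hb u) hline.differentiableAt heq 1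
  simpa [hline.fderiv, hγ0] using key

/-- (Lemma `leker`.) Let `f, f₁, …, f_{2n}` be holomorphic on an open `V ⊆ ℂⁿ` with the
`df_i(b)` linearly independent over `ℝ` at each point, and let `a : V → ℝ^{2n}` be the unique
real-valued map with `df = Σᵢ aᵢ dfᵢ`. Then the kernel of the real derivative `da_b` is a
complex vector subspace of `ℂⁿ`, i.e. it is stable under multiplication by `i`. -/
theorem stmt_10 {n : ℕ} {V : Set (Fin n → ℂ)} (hV : IsOpen V)
    (f : (Fin n → ℂ) → ℂ) (fi : Fin (2 * n) → (Fin n → ℂ) → ℂ)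
    (hf : DifferentiableOn ℂ f V) (hfi : ∀ i, DifferentiableOn ℂ (fi i) V)
    (hindep : ∀ b ∈ V,
      LinearIndependent ℝ (fun i : Fin (2 * n) => (fderiv ℂ (fi i) b).restrictScalars ℝ))
    (a : (Fin n → ℂ) → Fin (2 * n) → ℝ)
    (ha : ∀ b ∈ V, fderiv ℂ f b = ∑ i, ((a b i : ℂ) • fderiv ℂ (fi i) b)) :
    ∀ b ∈ V, ∀ v : Fin n → ℂ,
      fderiv ℝ a b v = 0 → fderiv ℝ a b (Complex.I • v) = 0 := by
  intro b hb v hv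
  by_cases hab : DifferentiableAt ℝ a b
  swap
  · simp [fderiv_zero_of_not_differentiableAt hab]
  set L := fun i => (fderiv ℂ (fi i) b).restrictScalars ℝ
  set B := Fintype.linearCombination ℝ L ∘ₗ (fderiv ℝ a b).toLinearMap
  have hB : ∀ u w, B u w = ∑ i, fderiv ℝ a b u i • fderiv ℂ (fi i) b w := by
    simp [B, L, Fintype.linearCombination_apply]
  have hBI : ∀ w, B (I • v) w = I • B v w :=
    B.apply_I_smul_left_of_apply_I_smul_self
      (fun u w => by simp only [hB, map_smul, Finset.smul_sum, smul_comm (_ : ℝ) I])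
      (fun u => by simpa only [hB] using
        sum_fderiv_real_coeff_I_smul_apply_self hV hf hfi ha hb hab u) v
  have hB0 : Fintype.linearCombination ℝ L (fderiv ℝ a b (I • v)) = 0 := by
    ext w
    simpa [B, hv] using hBI w
  exact linearIndependent_iff_injective_fintypeLinearCombination.mp (hindep b hb)
    (hB0.trans (map_zero _).symm)
end
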